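/- Let n ≥ 1 and let S be a left-handed skew Boolean algebra freely generated by a set of n distinct elements. Then S is finite and its cardinality is |S| = ∏_{m=1}^{n} (m+1)^{C(n,m)}, where C(n,m) is the binomial coefficient. -/

import Mathlib

universe u

/-- A skew Boolean algebra. -/
class SBA (S : Type u) where
  wedge : S → S → S
  vee : S → S → S
  diff : S → S → S
  zero : S
  wedge_assoc : ∀ x y z : S, wedge (wedge x y) z = wedge x (wedge y z)
  vee_assoc : ∀ x y z : S, vee (vee x y) z = vee x (vee y z)
  absorb1 : ∀ x y : S, wedge x (vee x y) = x
  absorb2 : ∀ x y : S, wedge (vee y x) x = x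
  absorb3 : ∀ x y : S, vee x (wedge x y) = x
  absorb4 : ∀ x y : S, vee (wedge y x) x = x
  sdistrib1 : ∀ x y z : S, wedge x (vee y z) = vee (wedge x y) (wedge x z)
  sdistrib2 : ∀ x y z : S, wedge (vee x y) z = vee (wedge x z) (wedge y z)
  zero_wedge : ∀ x : S, wedge zero x = zero
  wedge_zero : ∀ x : S, wedge x zero = zero
  zero_vee : ∀ x : S, vee zero x = x
  vee_zero : ∀ x : S, vee x zero = x
  diff_ax1 : ∀ x y : S, vee (wedge (wedge x y) x) (diff x y) = x
  diff_ax2 : ∀ x y : S, wedge (wedge (wedge x y) x) (diff x y) = zero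
  diff_ax3 : ∀ x y : S, wedge (diff x y) (wedge (wedge x y) x) = zero

namespace SBA

scoped infixl:70 " ⋏ " => SBA.wedge
scoped infixl:65 " ⋎ " => SBA.vee
scoped infixl:70 " ∖ " => SBA.diff

variable {S : Type u} [SBA S]

/-- Green's relation `D`: `x D y` iff `x⋏y⋏x = x` and `y⋏x⋏y = y`. -/
def Drel (x y : S) : Prop := x ⋏ y ⋏ x = x ∧ y ⋏ x ⋏ y = y

/-- The natural partial order: `x ≤ y` iff `x⋏y = x = y⋏x`. -/
def nle (x y : S) : Prop := x ⋏ y = x ∧ y ⋏ x = x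

/-- An atom: a nonzero element with nothing strictly between it and `0`. -/
def IsAtom (a : S) : Prop := a ≠ zero ∧ ∀ x : S, nle x a → x = zero ∨ x = a

/-- `X` generates `S`: the only subset of `S` containing `X` and `0` and closed
under the three operations is `S` itself. -/
def Generates (X : Set S) : Prop :=
  ∀ T : Set S, X ⊆ T → zero ∈ T →
    (∀ a b : S, a ∈ T → b ∈ T → a ⋏ b ∈ T ∧ a ⋎ b ∈ T ∧ a ∖ b ∈ T) →
    T = Set.univ

/-- A homomorphism of skew Boolean algebras. -/
def IsHom {T : Type u} [SBA T] (f : S → T) : Prop :=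
  (∀ a b : S, f (a ⋏ b) = f a ⋏ f b) ∧ (∀ a b : S, f (a ⋎ b) = f a ⋎ f b) ∧
    (∀ a b : S, f (a ∖ b) = f a ∖ f b) ∧ f zero = zero

end SBA

open SBA

/-- A left-handed skew Boolean algebra. -/
class LeftHanded (S : Type u) [SBA S] : Prop where
  lh_wedge : ∀ x y : S, x ⋏ y ⋏ x = x ⋏ y
  lh_vee : ∀ x y : S, x ⋎ y ⋎ x = y ⋎ x

/-- `S` is freely generated by `X` over the variety of all skew Boolean algebras. -/
def FreelyGenerates (S : Type u) [SBA S] (X : Set S) : Prop :=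
  Generates X ∧
    ∀ (T : Type u) [SBA T], ∀ g : X → T,
      ∃ f : S → T, IsHom f ∧ ∀ x : X, f x = g x

/-- `S` is freely generated by `X` over the variety of left-handed skew Boolean algebras. -/
def LFreelyGenerates (S : Type u) [SBA S] [LeftHanded S] (X : Set S) : Prop :=
  Generates X ∧
    ∀ (T : Type u) [SBA T] [LeftHanded T], ∀ g : X → T,
      ∃ f : S → T, IsHom f ∧ ∀ x : X, f x = g x

/-!
For generators `x : ι → S`, the atom `atom x A c` (for `c ∈ A ⊆ ι`) is the word
`x c ⋏ ⋀_{d ∈ A} x d` minus `⋁_{d ∉ A} x d`. Atoms with different `A` are orthogonal, and for fixed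
`A` the map sending `c` to `atom x A c` and `0` to `0` is a homomorphism out of the primitive
algebra `A ∪ {0}`. Hence `v ↦ ⋁_A atom x A (v A)` is a homomorphism `modelLift x` from the product
`Model ι` of these primitive algebras to `S`. The Boole–Shannon expansion
`x c = ⋁_{A ∋ c} atom x A c` shows that `modelLift x` maps the generators of the model to `x`, so it
is onto when `x` generates `S`. Freeness gives a homomorphism `f` back with `f ∘ x` the generators
of the model, and `f ∘ modelLift x = id` because the model is the orthogonal join of its own atoms.
So `|S| = ∏_{A ⊆ ι} (|A| + 1)`.
-/

theorem List.Sublist.filter_mem_toFinset {α : Type*} [DecidableEq α] {T M : List α}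
    (hT : T.Sublist M) (hM : M.Nodup) : M.filter (· ∈ T.toFinset) = T := by
  have h : T.Sublist (M.filter (· ∈ T.toFinset)) := by
    simpa [List.filter_eq_self.2] using hT.filter (· ∈ T.toFinset)
  refine (h.eq_of_length_le ((hM.filter _).length_le_of_subset fun a ha => ?_)).symm
  simpa using (List.mem_filter.1 ha).2

theorem List.Nodup.sublists'_map_toFinset_perm {α : Type*} [Fintype α] [DecidableEq α]
    {M : List α} (hM : M.Nodup) (hall : ∀ a, a ∈ M) :
    (M.sublists'.map List.toFinset).Perm (Finset.univ : Finset (Finset α)).toList := by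
  refine List.perm_of_nodup_nodup_toFinset_eq ?_ (Finset.nodup_toList _) ?_
  · refine (List.nodup_sublists'.2 hM).map_on fun T hT T' hT' h => ?_
    rw [← (List.mem_sublists'.1 hT).filter_mem_toFinset hM, h,
      (List.mem_sublists'.1 hT').filter_mem_toFinset hM]
  · ext B
    simp only [List.mem_toFinset, List.mem_map, List.mem_sublists', Finset.mem_toList,
      Finset.mem_univ, iff_true]
    exact ⟨M.filter (· ∈ B), List.filter_sublist, by ext; simp [hall]⟩

namespace SBA

section Basic

variable {S : Type u} [SBA S]

theorem wedge_idem (a : S) : a ⋏ a = a := by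
  simpa only [vee_zero] using absorb1 a zero

theorem vee_idem (a : S) : a ⋎ a = a := by
  simpa only [wedge_idem] using absorb4 a a

theorem eq_zero_of_vee_eq_zero_left {a b : S} (h : a ⋎ b = zero) : a = zero := by
  simpa only [h, wedge_zero] using (absorb1 a b).symm

theorem eq_zero_of_vee_eq_zero_right {a b : S} (h : a ⋎ b = zero) : b = zero := by
  simpa only [h, zero_wedge] using (absorb2 b a).symm

end Basic

section LeftHanded

variable {S : Type u} [SBA S] [LeftHanded S]

theorem wedge_vee_left_absorb (a b : S) : a ⋏ (b ⋎ a) = a := by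
  rw [← LeftHanded.lh_vee a b, vee_assoc, absorb1]

theorem vee_wedge_left_absorb (a b : S) : a ⋏ b ⋎ a = a := by
  calc a ⋏ b ⋎ a = a ⋏ b ⋎ a ⋏ a := by rw [wedge_idem]
    _ = a := by rw [← sdistrib1, wedge_vee_left_absorb]

theorem vee_comm_of_wedge_eq_zero {a b : S} (h : b ⋏ a = zero) : a ⋎ b = b ⋎ a := by
  have h1 : (a ⋎ b) ⋏ a = a := by rw [sdistrib2, wedge_idem, h, vee_zero]
  rw [← LeftHanded.lh_vee a b, ← congrArg ((a ⋎ b) ⋎ ·) h1, absorb3]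

theorem wedge_vee_diff (a b : S) : a ⋏ b ⋎ a ∖ b = a := by
  simpa only [LeftHanded.lh_wedge] using diff_ax1 a b

theorem wedge_wedge_diff (a b : S) : a ⋏ b ⋏ (a ∖ b) = zero := by
  simpa only [LeftHanded.lh_wedge] using diff_ax2 a b

theorem diff_wedge_wedge (a b : S) : a ∖ b ⋏ (a ⋏ b) = zero := by
  simpa only [LeftHanded.lh_wedge] using diff_ax3 a b

theorem diff_eq_self_of_wedge_eq_zero {a b : S} (h : a ⋏ b = zero) : a ∖ b = a := by
  simpa only [h, zero_vee] using wedge_vee_diff a b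

theorem diff_eq_zero_of_wedge_eq_self {a b : S} (h : a ⋏ b = a) : a ∖ b = zero := by
  have h1 : a ⋎ a ∖ b = a := by simpa only [h] using wedge_vee_diff a b
  have h2 : a ⋏ (a ∖ b) = zero := by simpa only [h] using wedge_wedge_diff a b
  simpa only [h1, h2] using (absorb2 (a ∖ b) a).symm

theorem diff_zero (a : S) : a ∖ zero = a := diff_eq_self_of_wedge_eq_zero (wedge_zero a)

theorem zero_diff (a : S) : zero ∖ a = zero := diff_eq_zero_of_wedge_eq_self (zero_wedge a)

theorem diff_wedge_self (a b : S) : a ∖ b ⋏ a = a ∖ b :=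
  calc a ∖ b ⋏ a = a ∖ b ⋏ (a ⋏ b ⋎ a ∖ b) := by rw [wedge_vee_diff]
    _ = a ∖ b := by rw [sdistrib1, diff_wedge_wedge, zero_vee, wedge_idem]

theorem wedge_diff_self (a b : S) : a ⋏ (a ∖ b) = a ∖ b :=
  calc a ⋏ (a ∖ b) = (a ⋏ b ⋎ a ∖ b) ⋏ (a ∖ b) := by rw [wedge_vee_diff]
    _ = a ∖ b := by rw [sdistrib2, wedge_wedge_diff, zero_vee, wedge_idem]

theorem diff_vee_wedge (a b : S) : a ∖ b ⋎ a ⋏ b = a := by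
  rw [vee_comm_of_wedge_eq_zero (wedge_wedge_diff a b), wedge_vee_diff]

theorem diff_wedge_eq_zero (a b : S) : a ∖ b ⋏ b = zero := by
  rw [← diff_wedge_self, wedge_assoc, diff_wedge_wedge]

theorem wedge_diff_eq_zero (a b : S) : b ⋏ (a ∖ b) = zero :=
  calc b ⋏ (a ∖ b) = b ⋏ a ⋏ b ⋏ (a ∖ b) := by
        rw [LeftHanded.lh_wedge, wedge_assoc, wedge_diff_self]
    _ = zero := by
        rw [wedge_assoc (b ⋏ a), wedge_assoc b, ← wedge_assoc a b, wedge_wedge_diff, wedge_zero]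

theorem wedge_wedge_eq_zero {a c : S} (b : S) (h : a ⋏ c = zero) : a ⋏ b ⋏ c = zero := by
  rw [← LeftHanded.lh_wedge a b, wedge_assoc (a ⋏ b) a c, h, wedge_zero]

theorem eq_diff_of {a b e : S} (h₁ : a ⋏ b ⋎ e = a) (h₂ : e ⋏ (a ⋏ b) = zero) : e = a ∖ b := by
  have hea : e ⋏ a = e := by rw [← h₁, sdistrib1, h₂, zero_vee, wedge_idem]
  have hde : e ⋏ (a ∖ b) = a ∖ b :=
    calc e ⋏ (a ∖ b) = (a ⋏ b ⋎ e) ⋏ (a ∖ b) := by rw [sdistrib2, wedge_wedge_diff, zero_vee]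
      _ = a ∖ b := by rw [h₁, wedge_diff_self]
  calc e = e ⋏ (a ⋏ b ⋎ a ∖ b) := by rw [wedge_vee_diff, hea]
    _ = a ∖ b := by rw [sdistrib1, h₂, zero_vee, hde]

theorem diff_congr {a b b' : S} (h : a ⋏ b = a ⋏ b') : a ∖ b = a ∖ b' :=
  (eq_diff_of (by rw [h, wedge_vee_diff]) (by rw [h, diff_wedge_wedge])).symm

theorem wedge_right_comm (a b c : S) : a ⋏ b ⋏ c = a ⋏ c ⋏ b := by
  -- splitting `a` along `c` kills the part `a ∖ c` orthogonal to `c`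
  have key : ∀ a b c : S, a ⋏ b ⋏ c = a ⋏ c ⋏ b ⋏ c := fun a b c =>
    calc a ⋏ b ⋏ c = (a ⋏ c ⋎ a ∖ c) ⋏ (b ⋏ c) := by rw [wedge_vee_diff, wedge_assoc]
      _ = a ⋏ c ⋏ b ⋏ c := by
        rw [sdistrib2, ← wedge_assoc (a ∖ c), wedge_wedge_eq_zero b (diff_wedge_eq_zero a c),
          vee_zero, wedge_assoc (a ⋏ c)]
  calc a ⋏ b ⋏ c = a ⋏ b ⋏ (b ⋏ c) ⋏ b := by
        rw [wedge_assoc (a ⋏ b), LeftHanded.lh_wedge, ← wedge_assoc, wedge_assoc a b b, wedge_idem]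
    _ = a ⋏ (b ⋏ c) ⋏ b := (key a (b ⋏ c) b).symm
    _ = a ⋏ c ⋏ b := by rw [← wedge_assoc, key a c b]

theorem wedge_vee_comm (w a b : S) : w ⋏ (a ⋎ b) = w ⋏ (b ⋎ a) := by
  have key : ∀ p q : S, w ⋏ (p ⋎ q) ⋏ (w ⋏ (q ⋎ p)) = w ⋏ (p ⋎ q) := fun p q => by
    rw [← wedge_assoc, LeftHanded.lh_wedge, wedge_assoc, sdistrib2, wedge_vee_left_absorb,
      absorb1]
  have orth_of_orth : ∀ {d p q : S}, d ⋏ (p ⋎ q) = zero → d ⋏ (q ⋎ p) = zero :=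
    fun {d p q} h => by
      rw [sdistrib1] at h ⊢
      rw [eq_zero_of_vee_eq_zero_left h, eq_zero_of_vee_eq_zero_right h, vee_zero]
  have wedge_w : ∀ {d : S} (p : S), d ⋏ w = d → d ⋏ (w ⋏ p) = d ⋏ p := fun {d} p hd => by
    rw [← wedge_assoc, hd]
  -- `w` splits along `w ⋏ (b ⋎ a)`, and the complement is orthogonal to `w ⋏ (a ⋎ b)`
  have hd : w ∖ (w ⋏ (b ⋎ a)) ⋏ (w ⋏ (a ⋎ b)) = zero := by
    rw [wedge_w _ (diff_wedge_self _ _)]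
    refine orth_of_orth ?_
    rw [← wedge_w _ (diff_wedge_self _ _), diff_wedge_eq_zero]
  have hsplit : w ⋏ (b ⋎ a) ⋎ w ∖ (w ⋏ (b ⋎ a)) = w := by
    simpa only [← wedge_assoc, wedge_idem] using wedge_vee_diff w (w ⋏ (b ⋎ a))
  calc w ⋏ (a ⋎ b) = w ⋏ (w ⋏ (a ⋎ b)) := by rw [← wedge_assoc, wedge_idem]
    _ = w ⋏ (b ⋎ a) := by rw [← congrArg (· ⋏ _) hsplit, sdistrib2, key, hd, vee_zero]

theorem diff_vee (a b c : S) : a ∖ (b ⋎ c) = a ∖ b ∖ c := by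
  have hea : a ∖ b ∖ c ⋏ a = a ∖ b ∖ c := by
    rw [← diff_wedge_self (a ∖ b) c, wedge_assoc, diff_wedge_self]
  have heb : a ∖ b ∖ c ⋏ b = zero := by
    rw [← diff_wedge_self (a ∖ b) c, wedge_assoc, diff_wedge_eq_zero, wedge_zero]
  refine (eq_diff_of ?_ ?_).symm
  · calc a ⋏ (b ⋎ c) ⋎ a ∖ b ∖ c = a ⋏ b ⋎ (a ⋏ b ⋏ c ⋎ a ∖ b ⋏ c) ⋎ a ∖ b ∖ c := by
          rw [sdistrib1, ← sdistrib2, wedge_vee_diff]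
      _ = a ⋏ b ⋎ (a ∖ b ⋏ c ⋎ a ∖ b ∖ c) := by rw [← vee_assoc, absorb3, vee_assoc]
      _ = a := by rw [wedge_vee_diff, wedge_vee_diff]
  · rw [sdistrib1, sdistrib1, ← wedge_assoc, hea, heb, ← wedge_assoc, hea,
      diff_wedge_eq_zero, vee_zero]

theorem vee_diff (p q r : S) : (p ⋎ q) ∖ r = p ∖ r ⋎ q ∖ r := by
  have hdx : ∀ u v : S, u ∖ r ⋏ (v ⋏ r) = zero := fun u v => by
    rw [← wedge_assoc, wedge_wedge_eq_zero v (diff_wedge_eq_zero u r)]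
  refine (eq_diff_of ?_ ?_).symm
  · calc (p ⋎ q) ⋏ r ⋎ (p ∖ r ⋎ q ∖ r) = p ⋏ r ⋎ (q ⋏ r ⋎ p ∖ r) ⋎ q ∖ r := by
          rw [sdistrib2, vee_assoc, vee_assoc, vee_assoc]
      _ = p ⋎ q := by
        rw [vee_comm_of_wedge_eq_zero (hdx p q), ← vee_assoc, wedge_vee_diff, vee_assoc,
          wedge_vee_diff]
  · simp only [sdistrib2, sdistrib1, hdx, vee_zero]

theorem diff_wedge_comm (a b c : S) : a ∖ b ⋏ c = a ⋏ c ∖ b := by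
  refine eq_diff_of ?_ ?_
  · rw [wedge_right_comm, ← sdistrib2, wedge_vee_diff]
  · have h : a ∖ b ⋏ c ⋏ b = zero := by rw [wedge_right_comm, diff_wedge_eq_zero, zero_wedge]
    rw [← wedge_assoc, wedge_wedge_eq_zero _ h]

theorem diff_right_comm (a b c : S) : a ∖ b ∖ c = a ∖ c ∖ b := by
  rw [← diff_vee, ← diff_vee]
  exact diff_congr (wedge_vee_comm a b c)

end LeftHanded

section ListVee

variable {S : Type u} [SBA S]

def listVee (l : List S) : S := l.foldr (· ⋎ ·) zero

@[simp] theorem listVee_nil : listVee ([] : List S) = zero := rfl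

@[simp] theorem listVee_cons (a : S) (l : List S) : listVee (a :: l) = a ⋎ listVee l := rfl

theorem listVee_append (l₁ l₂ : List S) : listVee (l₁ ++ l₂) = listVee l₁ ⋎ listVee l₂ := by
  induction l₁ with
  | nil => rw [List.nil_append, listVee_nil, zero_vee]
  | cons a l ih => rw [List.cons_append, listVee_cons, listVee_cons, ih, vee_assoc]

theorem listVee_eq_zero_iff {l : List S} : listVee l = zero ↔ ∀ b ∈ l, b = zero := by
  induction l with
  | nil => simp
  | cons a l ih =>
    refine ⟨fun h => ?_, fun h => ?_⟩
    · rw [listVee_cons] at h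
      exact List.forall_mem_cons.2
        ⟨eq_zero_of_vee_eq_zero_left h, ih.1 (eq_zero_of_vee_eq_zero_right h)⟩
    · rw [List.forall_mem_cons] at h
      rw [listVee_cons, h.1, ih.2 h.2, vee_zero]

theorem wedge_listVee (a : S) (l : List S) : a ⋏ listVee l = listVee (l.map (a ⋏ ·)) := by
  induction l with
  | nil => exact wedge_zero a
  | cons b l ih => rw [listVee_cons, sdistrib1, ih]; rfl

theorem listVee_wedge (l : List S) (a : S) : listVee l ⋏ a = listVee (l.map (· ⋏ a)) := by
  induction l with
  | nil => exact zero_wedge a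
  | cons b l ih => rw [listVee_cons, sdistrib2, ih]; rfl

theorem vee_listVee_comm {a : S} {l : List S} (h : ∀ b ∈ l, a ⋎ b = b ⋎ a) :
    a ⋎ listVee l = listVee l ⋎ a := by
  induction l with
  | nil => rw [listVee_nil, zero_vee, vee_zero]
  | cons b l ih =>
    rw [List.forall_mem_cons] at h
    rw [listVee_cons, ← vee_assoc, h.1, vee_assoc, ih h.2, vee_assoc]

theorem listVee_perm {l l' : List S} (hp : l.Perm l')
    (hcomm : ∀ b ∈ l, ∀ c ∈ l, b ⋎ c = c ⋎ b) : listVee l = listVee l' := by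
  induction hp with
  | nil => rfl
  | cons a _ ih =>
    rw [listVee_cons, listVee_cons,
      ih fun b hb c hc => hcomm b (List.mem_cons_of_mem a hb) c (List.mem_cons_of_mem a hc)]
  | swap a b l =>
    rw [listVee_cons, listVee_cons, listVee_cons, listVee_cons, ← vee_assoc, ← vee_assoc,
      hcomm b (by simp) a (by simp)]
  | trans h₁₂ _ ih₁₂ ih₂₃ =>
    exact (ih₁₂ hcomm).trans
      (ih₂₃ fun b hb c hc => hcomm b (h₁₂.mem_iff.2 hb) c (h₁₂.mem_iff.2 hc))

theorem listVee_eq_of_forall_eq_or_eq_zero {w : S} {l : List S} (hw : w ∈ l)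
    (h : ∀ b ∈ l, b = w ∨ b = zero) : listVee l = w := by
  have key : listVee l = w ∨ listVee l = zero := by
    clear hw
    induction l with
    | nil => exact Or.inr rfl
    | cons b l ih =>
      rw [List.forall_mem_cons] at h
      rcases h.1 with rfl | rfl <;> rcases ih h.2 with h' | h' <;> rw [listVee_cons, h'] <;>
        simp only [vee_idem, vee_zero, zero_vee, true_or, or_true]
  rcases key with h' | h'
  · exact h'
  · rw [h', listVee_eq_zero_iff.1 h' w hw]

section LeftHanded

variable [LeftHanded S]

theorem listVee_diff (l : List S) (a : S) : listVee l ∖ a = listVee (l.map (· ∖ a)) := by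
  induction l with
  | nil => exact zero_diff a
  | cons b l ih => rw [listVee_cons, vee_diff, ih]; rfl

theorem wedge_listVee_of_mem {a b : S} {l : List S} (hab : a ⋏ b = a) (hb : b ∈ l) :
    a ⋏ listVee l = a := by
  induction l with
  | nil => simp at hb
  | cons c l ih =>
    rw [listVee_cons, sdistrib1]
    rcases List.mem_cons.1 hb with rfl | hb
    · rw [hab, absorb3]
    · rw [ih hb, vee_wedge_left_absorb]

end LeftHanded

end ListVee

section OrthogonalFamily

variable {S : Type u} [SBA S] {ι : Type*}

theorem wedge_listVee_map_of_orth {a : S} {g : ι → S} {l : List ι} {i : ι} (hi : i ∈ l)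
    (h : ∀ j ∈ l, j ≠ i → a ⋏ g j = zero) : a ⋏ listVee (l.map g) = a ⋏ g i := by
  rw [wedge_listVee, List.map_map]
  refine listVee_eq_of_forall_eq_or_eq_zero (List.mem_map_of_mem hi) fun b hb => ?_
  obtain ⟨j, hj, rfl⟩ := List.mem_map.1 hb
  by_cases hji : j = i
  · exact Or.inl (by rw [hji]; rfl)
  · exact Or.inr (h j hj hji)

theorem listVee_map_vee_of_pairwise [LeftHanded S] {g h : ι → S} {l : List ι}
    (hl : l.Pairwise fun i j => h i ⋏ g j = zero) :
    listVee (l.map g) ⋎ listVee (l.map h) = listVee (l.map fun i => g i ⋎ h i) := by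
  induction l with
  | nil => exact vee_zero zero
  | cons i l ih =>
    rw [List.pairwise_cons] at hl
    have hcomm : ∀ b ∈ l.map g, h i ⋎ b = b ⋎ h i := by
      intro b hb
      obtain ⟨j, hj, rfl⟩ := List.mem_map.1 hb
      exact (vee_comm_of_wedge_eq_zero (hl.1 j hj)).symm
    simp only [List.map_cons, listVee_cons]
    rw [vee_assoc, ← vee_assoc (listVee _), ← vee_listVee_comm hcomm, vee_assoc, ih hl.2,
      vee_assoc]

end OrthogonalFamily

instance instPi {ι : Type*} (P : ι → Type*) [∀ i, SBA (P i)] : SBA (∀ i, P i) where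
  wedge a b i := a i ⋏ b i
  vee a b i := a i ⋎ b i
  diff a b i := a i ∖ b i
  zero _ := zero
  wedge_assoc _ _ _ := funext fun _ => wedge_assoc _ _ _
  vee_assoc _ _ _ := funext fun _ => vee_assoc _ _ _
  absorb1 _ _ := funext fun _ => absorb1 _ _
  absorb2 _ _ := funext fun _ => absorb2 _ _
  absorb3 _ _ := funext fun _ => absorb3 _ _
  absorb4 _ _ := funext fun _ => absorb4 _ _
  sdistrib1 _ _ _ := funext fun _ => sdistrib1 _ _ _
  sdistrib2 _ _ _ := funext fun _ => sdistrib2 _ _ _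
  zero_wedge _ := funext fun _ => zero_wedge _
  wedge_zero _ := funext fun _ => wedge_zero _
  zero_vee _ := funext fun _ => zero_vee _
  vee_zero _ := funext fun _ => vee_zero _
  diff_ax1 _ _ := funext fun _ => diff_ax1 _ _
  diff_ax2 _ _ := funext fun _ => diff_ax2 _ _
  diff_ax3 _ _ := funext fun _ => diff_ax3 _ _

instance {ι : Type*} (P : ι → Type*) [∀ i, SBA (P i)] [∀ i, LeftHanded (P i)] :
    LeftHanded (∀ i, P i) where
  lh_wedge _ _ := funext fun _ => LeftHanded.lh_wedge _ _
  lh_vee _ _ := funext fun _ => LeftHanded.lh_vee _ _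

section Pi

variable {ι : Type*} {P : ι → Type*} [∀ i, SBA (P i)]

@[simp] theorem pi_wedge_apply (a b : ∀ i, P i) (i : ι) : (a ⋏ b) i = a i ⋏ b i := rfl
@[simp] theorem pi_vee_apply (a b : ∀ i, P i) (i : ι) : (a ⋎ b) i = a i ⋎ b i := rfl
@[simp] theorem pi_diff_apply (a b : ∀ i, P i) (i : ι) : (a ∖ b) i = a i ∖ b i := rfl

theorem listVee_apply (l : List (∀ i, P i)) (i : ι) : listVee l i = listVee (l.map (· i)) := by
  induction l with
  | nil => rfl
  | cons a l ih => rw [listVee_cons, pi_vee_apply, ih]; rfl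

end Pi

section OrthogonalSum

variable {S : Type u} [SBA S] [LeftHanded S] {ι : Type} [Fintype ι] {P : ι → Type u}
  [∀ i, SBA (P i)]

noncomputable def orthSum (φ : ∀ i, P i → S) (v : ∀ i, P i) : S :=
  listVee (Finset.univ.toList.map fun i => φ i (v i))

theorem isHom_orthSum {φ : ∀ i, P i → S} (hφ : ∀ i, IsHom (φ i))
    (horth : ∀ i j, i ≠ j → ∀ p q, φ i p ⋏ φ j q = zero) : IsHom (orthSum φ) := by
  have mem : ∀ i, i ∈ (Finset.univ : Finset ι).toList := fun i => by simp
  have wedge_orthSum : ∀ i p w, φ i p ⋏ orthSum φ w = φ i p ⋏ φ i (w i) := fun i p w =>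
    wedge_listVee_map_of_orth (mem i) fun j _ hji => horth i j (Ne.symm hji) p (w j)
  refine ⟨fun v w => ?_, fun v w => ?_, fun v w => ?_, ?_⟩
  · refine Eq.symm <| (listVee_wedge _ _).trans <| congrArg listVee ?_
    rw [List.map_map]
    exact List.map_congr_left fun i _ => by
      simp only [Function.comp, wedge_orthSum, pi_wedge_apply, (hφ i).1]
  · refine Eq.symm <| (listVee_map_vee_of_pairwise
      ((Finset.nodup_toList _).imp fun hij => horth _ _ hij _ _)).trans ?_
    exact congrArg listVee <| List.map_congr_left fun i _ => ((hφ i).2.1 _ _).symm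
  · refine Eq.symm <| (listVee_diff _ _).trans <| congrArg listVee ?_
    rw [List.map_map]
    refine List.map_congr_left fun i _ => ?_
    simp only [Function.comp, diff_congr (wedge_orthSum i (v i) w), pi_diff_apply, (hφ i).2.2.1]
  · exact listVee_eq_zero_iff.2 fun b hb => by
      obtain ⟨i, _, rfl⟩ := List.mem_map.1 hb
      exact (hφ i).2.2.2

end OrthogonalSum

section Cells

variable {S : Type u} [SBA S] {ι : Type*} (x : ι → S)

def wedgeFold (a : S) (l : List ι) : S := l.foldl (fun p d => p ⋏ x d) a

@[simp] theorem wedgeFold_nil (a : S) : wedgeFold x a [] = a := rfl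

@[simp] theorem wedgeFold_cons (a : S) (d : ι) (l : List ι) :
    wedgeFold x a (d :: l) = wedgeFold x (a ⋏ x d) l := rfl

theorem wedgeFold_zero (l : List ι) : wedgeFold x zero l = zero := by
  induction l with
  | nil => rfl
  | cons d l ih => rw [wedgeFold_cons, zero_wedge, ih]

theorem wedge_wedgeFold_of_forall {b a : S} {l : List ι} (hba : b ⋏ a = b)
    (h : ∀ d ∈ l, b ⋏ x d = b) : b ⋏ wedgeFold x a l = b := by
  induction l generalizing a with
  | nil => exact hba
  | cons d l ih =>
    rw [List.forall_mem_cons] at h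
    exact ih (by rw [← wedge_assoc, hba, h.1]) h.2

variable [LeftHanded S]

theorem wedgeFold_wedge (a : S) (d : ι) (l : List ι) :
    wedgeFold x (a ⋏ x d) l = wedgeFold x a l ⋏ x d := by
  induction l generalizing a with
  | nil => rfl
  | cons e l ih => rw [wedgeFold_cons, wedge_right_comm, ih, wedgeFold_cons]

theorem wedgeFold_wedge_of_mem {a : S} {k : ι} {l : List ι} (hk : k ∈ l) :
    wedgeFold x a l ⋏ x k = wedgeFold x a l := by
  induction l generalizing a with
  | nil => simp at hk
  | cons d l ih =>
    rcases List.mem_cons.1 hk with rfl | hk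
    · rw [wedgeFold_cons, wedgeFold_wedge, wedge_assoc, wedge_idem]
    · exact ih hk

variable [DecidableEq ι]

/-- `a ⋏ ⋀_{d ∈ A} x d` minus `⋁_{d ∈ M \ A} x d`, both taken in the order of `M`. -/
def cell (a : S) (M : List ι) (A : Finset ι) : S :=
  wedgeFold x a (M.filter (· ∈ A)) ∖ listVee ((M.filter (· ∉ A)).map x)

theorem cell_cons_of_not_mem (a : S) {d : ι} {M : List ι} {A : Finset ι} (hd : d ∉ A) :
    cell x a (d :: M) A = cell x a M A ∖ x d := by
  rw [cell, cell, List.filter_cons_of_neg (by simpa using hd),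
    List.filter_cons_of_pos (by simpa using hd), List.map_cons, listVee_cons, diff_vee,
    diff_right_comm]

theorem cell_cons_insert (a : S) {d : ι} {M : List ι} (hd : d ∉ M) (A : Finset ι) :
    cell x a (d :: M) (insert d A) = cell x a M A ⋏ x d := by
  have hM : ∀ e ∈ M, e ∈ insert d A ↔ e ∈ A := fun e he =>
    ⟨fun h => (Finset.mem_insert.1 h).resolve_left (ne_of_mem_of_not_mem he hd),
      Finset.mem_insert_of_mem⟩
  have hpos : M.filter (· ∈ insert d A) = M.filter (· ∈ A) :=
    List.filter_congr fun e he => by simp only [hM e he]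
  have hneg : M.filter (· ∉ insert d A) = M.filter (· ∉ A) :=
    List.filter_congr fun e he => by simp only [hM e he]
  rw [cell, cell, List.filter_cons_of_pos (by simp), List.filter_cons_of_neg (by simp), hpos,
    hneg, wedgeFold_cons, wedgeFold_wedge, diff_wedge_comm]

/-- Boole–Shannon expansion. -/
theorem listVee_cells (a : S) {M : List ι} (hM : M.Nodup) :
    listVee (M.sublists'.map fun T => cell x a M T.toFinset) = a := by
  induction M with
  | nil => simp [cell, diff_zero, vee_zero]
  | cons d M ih =>
    obtain ⟨hdM, hM⟩ := List.nodup_cons.1 hM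
    have hdT : ∀ T ∈ M.sublists', d ∉ T.toFinset := fun T hT hd =>
      hdM ((List.mem_sublists'.1 hT).subset (List.mem_toFinset.1 hd))
    set L := M.sublists'.map fun T => cell x a M T.toFinset
    have hnot : M.sublists'.map (fun T => cell x a (d :: M) T.toFinset) = L.map (· ∖ x d) := by
      rw [List.map_map]
      exact List.map_congr_left fun T hT => cell_cons_of_not_mem x a (hdT T hT)
    have hins : (M.sublists'.map (d :: ·)).map (fun T => cell x a (d :: M) T.toFinset) =
        L.map (· ⋏ x d) := by
      rw [List.map_map, List.map_map]
      exact List.map_congr_left fun T _ => by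
        simp only [Function.comp, List.toFinset_cons, cell_cons_insert x a hdM]
    have horth : L.Pairwise fun p q => p ⋏ x d ⋏ (q ∖ x d) = zero :=
      List.pairwise_of_forall fun p q => by rw [wedge_assoc, wedge_diff_eq_zero, wedge_zero]
    rw [List.sublists'_cons, List.map_append, listVee_append, hnot, hins,
      listVee_map_vee_of_pairwise horth]
    simpa only [diff_vee_wedge, List.map_id'] using ih hM

end Cells

section Atoms

variable {S : Type u} [SBA S] [LeftHanded S] {ι : Type*} [Fintype ι] [DecidableEq ι]
  (x : ι → S)

noncomputable def atom (A : Finset ι) (c : ι) : S := cell x (x c) Finset.univ.toList A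

theorem atom_wedge_of_not_mem {A : Finset ι} (c : ι) {k : ι} (hk : k ∉ A) :
    atom x A c ⋏ x k = zero := by
  have h := diff_wedge_eq_zero (wedgeFold x (x c) (Finset.univ.toList.filter (· ∈ A)))
    (listVee ((Finset.univ.toList.filter (· ∉ A)).map x))
  rw [wedge_listVee, listVee_eq_zero_iff, List.map_map] at h
  exact h _ (List.mem_map_of_mem (by simpa using hk))

theorem wedge_atom_of_not_mem {A : Finset ι} (c : ι) {k : ι} (hk : k ∉ A) :
    x k ⋏ atom x A c = zero := by
  have h := wedge_diff_eq_zero (wedgeFold x (x c) (Finset.univ.toList.filter (· ∈ A)))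
    (listVee ((Finset.univ.toList.filter (· ∉ A)).map x))
  rw [listVee_wedge, listVee_eq_zero_iff, List.map_map] at h
  exact h _ (List.mem_map_of_mem (by simpa using hk))

theorem atom_wedge_of_mem {A : Finset ι} (c : ι) {k : ι} (hk : k ∈ A) :
    atom x A c ⋏ x k = atom x A c := by
  rw [atom, cell]
  conv_lhs => rw [← diff_wedge_self]
  rw [wedge_assoc, wedgeFold_wedge_of_mem x (by simpa using hk), diff_wedge_self]

theorem atom_wedge_atom {A : Finset ι} (c : ι) {c' : ι} (hc' : c' ∈ A) :
    atom x A c ⋏ atom x A c' = atom x A c := by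
  set word := wedgeFold x (x c') (Finset.univ.toList.filter (· ∈ A))
  set neg := listVee ((Finset.univ.toList.filter (· ∉ A)).map x)
  have hword : atom x A c ⋏ word = atom x A c :=
    wedge_wedgeFold_of_forall x (atom_wedge_of_mem x c hc') fun d hd =>
      atom_wedge_of_mem x c (by simpa using hd)
  have hneg : atom x A c ⋏ neg = zero := diff_wedge_eq_zero _ _
  symm
  calc atom x A c = atom x A c ⋏ (word ⋏ neg ⋎ word ∖ neg) := by rw [wedge_vee_diff, hword]
    _ = atom x A c ⋏ atom x A c' := by rw [sdistrib1, ← wedge_assoc, hword, hneg, zero_vee]; rfl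

theorem atom_vee_atom {A : Finset ι} (c : ι) {c' : ι} (hc' : c' ∈ A) :
    atom x A c ⋎ atom x A c' = atom x A c' := by
  simpa only [atom_wedge_atom x c hc'] using absorb4 (atom x A c') (atom x A c)

theorem atom_diff_atom {A : Finset ι} (c : ι) {c' : ι} (hc' : c' ∈ A) :
    atom x A c ∖ atom x A c' = zero :=
  diff_eq_zero_of_wedge_eq_self (atom_wedge_atom x c hc')

theorem atom_wedge_atom_of_ne {A B : Finset ι} (c c' : ι) (hAB : A ≠ B) :
    atom x A c ⋏ atom x B c' = zero := by
  obtain ⟨k, hkB, hkA⟩ | ⟨k, hkA, hkB⟩ : (∃ k ∈ B, k ∉ A) ∨ ∃ k ∈ A, k ∉ B := by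
    by_contra! h
    exact hAB (Finset.Subset.antisymm h.2 h.1)
  · rw [← atom_wedge_of_mem x c' hkB, ← wedge_assoc, wedge_right_comm,
      atom_wedge_of_not_mem x c hkA, zero_wedge]
  · rw [← atom_wedge_of_mem x c hkA, wedge_assoc, wedge_atom_of_not_mem x c' hkB, wedge_zero]

theorem atom_eq_zero_of_not_mem {A : Finset ι} {c : ι} (hc : c ∉ A) : atom x A c = zero := by
  refine diff_eq_zero_of_wedge_eq_self (wedge_listVee_of_mem ?_ (List.mem_map_of_mem (a := c) ?_))
  · rw [← wedgeFold_wedge, wedge_idem]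
  · simpa using hc

end Atoms

section Hom

variable {S T : Type u} [SBA S] [SBA T] {f : S → T}

theorem IsHom.map_listVee (hf : IsHom f) (l : List S) : f (listVee l) = listVee (l.map f) := by
  induction l with
  | nil => exact hf.2.2.2
  | cons a l ih => rw [listVee_cons, hf.2.1, ih]; rfl

theorem IsHom.map_wedgeFold (hf : IsHom f) {ι : Type*} (x : ι → S) (a : S) (l : List ι) :
    f (wedgeFold x a l) = wedgeFold (f ∘ x) (f a) l := by
  induction l generalizing a with
  | nil => rfl
  | cons d l ih => rw [wedgeFold_cons, ih, hf.1]; rfl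

theorem IsHom.map_atom (hf : IsHom f) {ι : Type*} [Fintype ι] [DecidableEq ι] (x : ι → S)
    (A : Finset ι) (c : ι) : f (atom x A c) = atom (f ∘ x) A c := by
  rw [atom, cell, hf.2.2.1, hf.map_wedgeFold, hf.map_listVee, List.map_map]
  rfl

theorem isHom_eval {ι : Type} {P : ι → Type u} [∀ i, SBA (P i)] (i : ι) :
    IsHom fun v : ∀ i, P i => v i :=
  ⟨fun _ _ => rfl, fun _ _ => rfl, fun _ _ => rfl, rfl⟩

theorem Generates.surjective_of_isHom {X : Set T} (hX : Generates X) {φ : S → T}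
    (hφ : IsHom φ) (hXφ : X ⊆ Set.range φ) : Function.Surjective φ := by
  refine Set.range_eq_univ.1 (hX (Set.range φ) hXφ ⟨zero, hφ.2.2.2⟩ fun _ _ => ?_)
  rintro ⟨a, rfl⟩ ⟨b, rfl⟩
  exact ⟨⟨a ⋏ b, hφ.1 a b⟩, ⟨a ⋎ b, hφ.2.1 a b⟩, ⟨a ∖ b, hφ.2.2.1 a b⟩⟩

end Hom

/-- The primitive algebra `γ ∪ {0}`, with `none` as `0`: `a ⋏ b = a` and `a ⋎ b = b` unless one
side is `0`. -/
instance instOption (γ : Type*) : SBA (Option γ) where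
  wedge a b := match b with | none => none | some _ => a
  vee a b := match b with | none => a | some _ => b
  diff a b := match b with | none => a | some _ => none
  zero := none
  wedge_assoc a b c := by cases b <;> cases c <;> rfl
  vee_assoc a b c := by cases b <;> cases c <;> rfl
  absorb1 a b := by cases a <;> cases b <;> rfl
  absorb2 a b := by cases a <;> cases b <;> rfl
  absorb3 a b := by cases a <;> cases b <;> rfl
  absorb4 a b := by cases a <;> cases b <;> rfl
  sdistrib1 a b c := by cases a <;> cases b <;> cases c <;> rfl
  sdistrib2 a b c := by cases a <;> cases b <;> cases c <;> rfl
  zero_wedge a := by cases a <;> rfl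
  wedge_zero a := rfl
  zero_vee a := by cases a <;> rfl
  vee_zero a := rfl
  diff_ax1 a b := by cases a <;> cases b <;> rfl
  diff_ax2 a b := by cases a <;> cases b <;> rfl
  diff_ax3 a b := by cases a <;> cases b <;> rfl

instance (γ : Type*) : LeftHanded (Option γ) where
  lh_wedge a b := by cases a <;> cases b <;> rfl
  lh_vee a b := by cases a <;> cases b <;> rfl

section Option

variable {γ : Type*} {ι : Type*} (y : ι → Option γ)

@[simp] theorem option_zero : (zero : Option γ) = none := rfl
@[simp] theorem option_wedge_none (a : Option γ) : a ⋏ none = none := rfl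
@[simp] theorem option_wedge_some (a : Option γ) (c : γ) : a ⋏ some c = a := rfl
@[simp] theorem option_diff_none (a : Option γ) : a ∖ none = a := rfl
@[simp] theorem option_diff_some (a : Option γ) (c : γ) : a ∖ some c = none := rfl

theorem option_wedgeFold_of_forall {a : Option γ} {l : List ι} (h : ∀ d ∈ l, y d ≠ none) :
    wedgeFold y a l = a := by
  induction l generalizing a with
  | nil => rfl
  | cons d l ih =>
    rw [List.forall_mem_cons] at h
    obtain ⟨c, hc⟩ := Option.ne_none_iff_exists'.1 h.1
    rw [wedgeFold_cons, hc, option_wedge_some, ih h.2]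

theorem option_wedgeFold_of_mem {a : Option γ} {l : List ι} {d : ι} (hd : d ∈ l)
    (h : y d = none) : wedgeFold y a l = none := by
  induction l generalizing a with
  | nil => simp at hd
  | cons e l ih =>
    rw [wedgeFold_cons]
    rcases List.mem_cons.1 hd with rfl | hd
    · rw [h, option_wedge_none]
      exact wedgeFold_zero y l
    · exact ih hd

end Option

section Model

variable (ι : Type) [Fintype ι] [DecidableEq ι]

abbrev ModelCoord (A : Finset ι) : Type u := Option (ULift.{u} A)

/-- The free left-handed skew Boolean algebra on `ι`, lifted to `Type u` so that freeness applies
to it. -/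
abbrev Model : Type u := ∀ A : Finset ι, ModelCoord.{u} ι A

variable {ι}

def modelGen (c : ι) : Model.{u} ι := fun A => if h : c ∈ A then some ⟨⟨c, h⟩⟩ else none

variable {S : Type u} [SBA S]

noncomputable def atomEmbed (x : ι → S) (A : Finset ι) : ModelCoord.{u} ι A → S
  | none => zero
  | some c => atom x A c.down

noncomputable def modelLift (x : ι → S) : Model.{u} ι → S := orthSum (atomEmbed x)

theorem IsHom.map_modelLift {T : Type u} [SBA T] {f : S → T} (hf : IsHom f)
    (x : ι → S) (v : Model.{u} ι) : f (modelLift x v) = modelLift (f ∘ x) v := by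
  rw [modelLift, orthSum, hf.map_listVee, List.map_map]
  refine congrArg listVee (List.map_congr_left fun A _ => ?_)
  show f (atomEmbed x A (v A)) = atomEmbed (f ∘ x) A (v A)
  rcases v A with _ | ⟨c⟩
  · exact hf.2.2.2
  · exact hf.map_atom x A c.down

variable [LeftHanded S]

theorem isHom_atomEmbed (x : ι → S) (A : Finset ι) : IsHom (atomEmbed x A) := by
  refine ⟨fun o o' => ?_, fun o o' => ?_, fun o o' => ?_, rfl⟩ <;>
    rcases o' with _ | ⟨⟨c', hc'⟩⟩
  · exact (wedge_zero _).symm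
  · rcases o with _ | ⟨⟨c, hc⟩⟩
    · exact (zero_wedge _).symm
    · exact (atom_wedge_atom x c hc').symm
  · exact (vee_zero _).symm
  · rcases o with _ | ⟨⟨c, hc⟩⟩
    · exact (zero_vee _).symm
    · exact (atom_vee_atom x c hc').symm
  · exact (diff_zero _).symm
  · rcases o with _ | ⟨⟨c, hc⟩⟩
    · exact (zero_diff _).symm
    · exact (atom_diff_atom x c hc').symm

theorem atomEmbed_wedge_atomEmbed_of_ne (x : ι → S) {A B : Finset ι} (hAB : A ≠ B)
    (o : ModelCoord.{u} ι A) (o' : ModelCoord.{u} ι B) :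
    atomEmbed x A o ⋏ atomEmbed x B o' = zero := by
  rcases o with _ | ⟨⟨c, _⟩⟩
  · exact zero_wedge _
  · rcases o' with _ | ⟨⟨c', _⟩⟩
    · exact wedge_zero _
    · exact atom_wedge_atom_of_ne x c c' hAB

theorem isHom_modelLift (x : ι → S) : IsHom (modelLift x) :=
  isHom_orthSum (isHom_atomEmbed x) fun _ _ hAB => atomEmbed_wedge_atomEmbed_of_ne x hAB

theorem modelLift_modelGen (x : ι → S) (c : ι) : modelLift x (modelGen c) = x c := by
  have hgen : ∀ A, atomEmbed x A (modelGen c A) = atom x A c := fun A => by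
    by_cases hc : c ∈ A
    · simp [modelGen, hc, atomEmbed]
    · simp [modelGen, hc, atomEmbed, atom_eq_zero_of_not_mem x hc]
  have hcomm : ∀ A B : Finset ι, atom x A c ⋎ atom x B c = atom x B c ⋎ atom x A c := fun A B => by
    by_cases hAB : A = B
    · rw [hAB]
    · exact vee_comm_of_wedge_eq_zero (atom_wedge_atom_of_ne x c c (Ne.symm hAB))
  have hperm := (Finset.nodup_toList (Finset.univ : Finset ι)).sublists'_map_toFinset_perm
    fun i => by simp
  calc modelLift x (modelGen c) = listVee (Finset.univ.toList.map (atom x · c)) := by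
        rw [modelLift, orthSum, List.map_congr_left fun A _ => hgen A]
    _ = listVee ((Finset.univ.toList.sublists'.map List.toFinset).map (atom x · c)) := by
        refine (listVee_perm (hperm.map _) ?_).symm
        simp only [List.mem_map]
        rintro _ ⟨A, -, rfl⟩ _ ⟨B, -, rfl⟩
        exact hcomm A B
    _ = x c := by
        rw [List.map_map]
        exact listVee_cells x (x c) (Finset.nodup_toList _)

end Model

section ModelAtoms

variable {ι : Type} [Fintype ι] [DecidableEq ι]

theorem atom_modelGen_apply (A B : Finset ι) (c : ι) :
    atom modelGen.{u} A c B = atom (fun d => modelGen.{u} d B) A c :=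
  (isHom_eval B).map_atom modelGen A c

theorem atomEmbed_modelGen_apply_self {A : Finset ι} (o : ModelCoord.{u} ι A) :
    atomEmbed modelGen.{u} A o A = o := by
  rcases o with _ | ⟨⟨c, hc⟩⟩
  · rfl
  · have hneg : listVee ((Finset.univ.toList.filter (· ∉ A)).map fun d => modelGen.{u} d A) =
        none :=
      listVee_eq_zero_iff.2 fun b hb => by
        obtain ⟨d, hd, rfl⟩ := List.mem_map.1 hb
        simpa [modelGen] using hd
    rw [atomEmbed, atom_modelGen_apply, atom, cell, hneg, option_diff_none,
      option_wedgeFold_of_forall _ fun d hd => by simp_all [modelGen]]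
    simp [modelGen, hc]

theorem atomEmbed_modelGen_apply_of_ne {A B : Finset ι} (hAB : A ≠ B) (o : ModelCoord.{u} ι A) :
    atomEmbed modelGen.{u} A o B = none := by
  rcases o with _ | ⟨⟨c, hc⟩⟩
  · rfl
  rw [atomEmbed, atom_modelGen_apply, atom, cell]
  by_cases hAB' : A ⊆ B
  · obtain ⟨d, hdB, hdA⟩ := Finset.exists_of_ssubset (hAB'.ssubset_of_ne hAB)
    have hneg : listVee ((Finset.univ.toList.filter (· ∉ A)).map fun d => modelGen.{u} d B) ≠
        none := fun h => by
      have := listVee_eq_zero_iff.1 h (modelGen d B) (List.mem_map_of_mem (by simpa using hdA))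
      simp [modelGen, hdB] at this
    obtain ⟨p, hp⟩ := Option.ne_none_iff_exists'.1 hneg
    rw [hp, option_diff_some]
  · obtain ⟨d, hdA, hdB⟩ := Finset.not_subset.1 hAB'
    rw [option_wedgeFold_of_mem _ (d := d) (by simpa using hdA) (by simp [modelGen, hdB])]
    exact zero_diff _

theorem modelLift_modelGen_left (v : Model.{u} ι) : modelLift modelGen.{u} v = v := by
  funext B
  rw [modelLift, orthSum, listVee_apply, List.map_map]
  refine listVee_eq_of_forall_eq_or_eq_zero (List.mem_map.2 ⟨B, by simp, ?_⟩) fun b hb => ?_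
  · exact atomEmbed_modelGen_apply_self (v B)
  · obtain ⟨A, -, rfl⟩ := List.mem_map.1 hb
    by_cases hAB : A = B
    · subst hAB
      exact Or.inl (atomEmbed_modelGen_apply_self (v A))
    · exact Or.inr (atomEmbed_modelGen_apply_of_ne hAB (v A))

end ModelAtoms

theorem card_model (n : ℕ) :
    Nat.card (Model.{u} (Fin n)) = ∏ m ∈ Finset.Icc 1 n, (m + 1) ^ n.choose m := by
  have hcoord : ∀ A : Finset (Fin n), Nat.card (ModelCoord.{u} _ A) = A.card + 1 := by
    simp [Nat.card_eq_fintype_card]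
  have hrange : Finset.range (n + 1) = insert 0 (Finset.Icc 1 n) := by
    ext k
    simp only [Finset.mem_range, Finset.mem_insert, Finset.mem_Icc]
    omega
  rw [Nat.card_pi, Fintype.prod_congr _ _ hcoord, ← Finset.powerset_univ, Finset.prod_powerset,
    Finset.card_univ, Fintype.card_fin, hrange, Finset.prod_insert (by simp)]
  simp [Finset.prod_powersetCard (f := (· + 1))]

end SBA

theorem stmt6_general (n : ℕ) (S : Type u) [SBA S] [LeftHanded S]
    (x : Fin n → S) (hinj : Function.Injective x)
    (hfree : LFreelyGenerates S (Set.range x)) :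
    Finite S ∧ Nat.card S = ∏ m ∈ Finset.Icc 1 n, (m + 1) ^ n.choose m := by
  obtain ⟨f, hf, hfg⟩ := hfree.2 (Model.{u} (Fin n)) fun z => modelGen (Classical.choose z.2)
  have hfx : f ∘ x = modelGen := funext fun c => by
    rw [Function.comp, hfg ⟨x c, c, rfl⟩]
    exact congrArg modelGen (hinj (Classical.choose_spec (⟨c, rfl⟩ : ∃ c', x c' = x c)))
  have hinv : Function.LeftInverse f (modelLift x) := fun v => by
    rw [hf.map_modelLift, hfx, modelLift_modelGen_left]
  have hsurj : Function.Surjective (modelLift x) :=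
    hfree.1.surjective_of_isHom (isHom_modelLift x) fun _ ⟨c, hc⟩ =>
      ⟨modelGen c, hc ▸ modelLift_modelGen x c⟩
  exact ⟨Finite.of_surjective _ hsurj,
    (Nat.card_eq_of_bijective _ ⟨hinv.injective, hsurj⟩).symm.trans (card_model n)⟩

theorem stmt6 (n : ℕ) (hn : 1 ≤ n) (S : Type u) [SBA S] [LeftHanded S]
    (x : Fin n → S) (hinj : Function.Injective x)
    (hfree : LFreelyGenerates S (Set.range x)) :
    Finite S ∧ Nat.card S = ∏ m ∈ Finset.Icc 1 n, (m + 1) ^ n.choose m :=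
  stmt6_general n S x hinj hfree
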